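/- Let Γ̃_1,…,Γ̃_n be Hermitian d×d complex matrices, γ̃_1,…,γ̃_n real numbers, and ε' > 0, and let S̃_{ε'} = {ρ : ρ is a positive semidefinite d×d complex matrix with |Re Tr(Γ̃_i ρ) − γ̃_i| ≤ ε' for all i}. Let G be a CPTNI map from d×d to d'×d' complex matrices with d' ≥ 2, Z a pinching channel on d'×d' complex matrices, and define f(ρ) = H(Z(G(ρ))) − H(G(ρ)), G_ε(ρ) = (1−ε)·G(ρ) + (ε/d')·I_{d'}, f_ε(ρ) = H(Z(G_ε(ρ))) − H(G_ε(ρ)), and ζ_ε = 2ε(d'−1)·log(d'/(ε(d'−1))). Let ε satisfy 0 < ε ≤ 1/(e·(d'−1)), let ρ ∈ S̃_{ε'}, and let ∇ be a Hermitian d×d matrix satisfying the subgradient inequality f_ε(σ) ≥ f_ε(ρ) + Re Tr((σ − ρ)ᵀ ∇) for all σ ∈ S̃_{ε'}. Then for every pair y, z ∈ ℝⁿ with −z_i ≤ y_i ≤ z_i for all i and with ∇ − Σ_{i=1}^n y_i Γ̃_iᵀ positive semidefinite, and for every σ ∈ S̃_{ε'} with Tr σ = 1, one has f(σ) ≥ f_ε(ρ)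 − Re Tr(ρᵀ ∇) + Σ_{i=1}^n γ̃_i y_i − ε'·Σ_{i=1}^n z_i − ζ_ε. -/

import Mathlib

open scoped BigOperators ComplexOrder Matrix

/-- The von Neumann entropy `H(σ) = −Σ λ_i log λ_i` of a Hermitian matrix
(`0` for non-Hermitian matrices; `log` is the natural logarithm, `0 log 0 = 0`). -/
noncomputable def vnEntropy {d : ℕ} (A : Matrix (Fin d) (Fin d) ℂ) : ℝ :=
  if hA : A.IsHermitian then -∑ i, hA.eigenvalues i * Real.log (hA.eigenvalues i) else 0

/-!
The subgradient inequality at `σ` gives `f_ε(σ) ≥ f_ε(ρ) + Re Tr(σᵀ∇) - Re Tr(ρᵀ∇)`, and weak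
duality gives `Re Tr(σᵀ∇) ≥ Σ γ̃_i y_i - ε' Σ z_i`, since `∇ - Σ y_i Γ̃_iᵀ ⪰ 0` and `|y_i| ≤ z_i`.
It remains to see `f ≥ f_ε - ζ_ε`. The pinching is unital and trace preserving, so it commutes
with the depolarization `A ↦ (1 - ε) A + (ε / d') I`. Working eigenvalue by eigenvalue,
depolarizing raises `H(Z(G σ))` by at most `ε (1 + log d' - log ε)` (subadditivity of
`-x log x`) and raises `H(G σ)` by at least `ε log d' - d' ε / e` (concavity of `-x log x` and
`-x log x ≤ 1 / e`); the difference of these is at most `ζ_ε` once `ε ≤ 1 / e`.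
-/

open Matrix Real

namespace Real

lemma negMulLog_le_exp_one_inv {x : ℝ} (hx : 0 ≤ x) : negMulLog x ≤ (exp 1)⁻¹ := by
  have h := negMulLog_le_one_sub_self (mul_nonneg (exp_pos 1).le hx)
  rw [negMulLog_mul, negMulLog, log_exp] at h
  rw [← one_div, le_div_iff₀ (exp_pos 1)]
  linarith

lemma negMulLog_add_le {x y : ℝ} (hx : 0 ≤ x) (hy : 0 ≤ y) :
    negMulLog (x + y) ≤ negMulLog x + negMulLog y := by
  rcases hx.eq_or_lt with rfl | hx
  · simp
  rcases hy.eq_or_lt with rfl | hy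
  · simp
  have hlx : log x ≤ log (x + y) := log_le_log hx (by linarith)
  have hly : log y ≤ log (x + y) := log_le_log hy (by linarith)
  simp only [negMulLog]
  nlinarith [mul_le_mul_of_nonneg_left hlx hx.le, mul_le_mul_of_nonneg_left hly hy.le]

lemma negMulLog_mul_add_sub_le {a x c : ℝ} (ha₀ : 0 ≤ a) (ha₁ : a ≤ 1) (hx₀ : 0 ≤ x)
    (hx₁ : x ≤ 1) (hc : 0 ≤ c) :
    negMulLog (a * x + c) - negMulLog x ≤ x * negMulLog a + negMulLog c := by
  have hsub := negMulLog_add_le (mul_nonneg ha₀ hx₀) hc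
  have hx : 0 ≤ negMulLog x := negMulLog_nonneg hx₀ hx₁
  rw [negMulLog_mul] at hsub
  nlinarith

lemma mul_sub_le_negMulLog_sub {ε x y : ℝ} (hε₀ : 0 ≤ ε) (hε₁ : ε ≤ 1) (hx : 0 ≤ x)
    (hy : 0 ≤ y) :
    ε * (negMulLog y - (exp 1)⁻¹) ≤ negMulLog ((1 - ε) * x + ε * y) - negMulLog x := by
  have hconc := concaveOn_negMulLog.2 (Set.mem_Ici.2 hx) (Set.mem_Ici.2 hy)
    (sub_nonneg.2 hε₁) hε₀ (by ring)
  have he := negMulLog_le_exp_one_inv hx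
  simp only [smul_eq_mul] at hconc
  nlinarith

lemma mul_one_add_div_exp_one_sub_log_le {D ε : ℝ} (hD : 2 ≤ D) (hε₀ : 0 < ε)
    (hε₁ : ε ≤ (exp 1)⁻¹) :
    ε * (1 + D / exp 1 - log ε) ≤ 2 * ε * (D - 1) * log (D / (ε * (D - 1))) := by
  have hD₁ : 0 < D - 1 := by linarith
  have hlogε : log ε ≤ -1 := by
    rwa [log_le_iff_le_exp hε₀, exp_neg]
  have hlog_split : log (D / (ε * (D - 1))) = log (D / (D - 1)) - log ε := by
    rw [div_mul_eq_div_div_swap, log_div (by positivity) hε₀.ne']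
  -- `log (D / (D - 1)) ≥ 1 - (D - 1) / D = 1 / D`
  have hlogD : 1 ≤ 2 * (D - 1) * log (D / (D - 1)) := by
    have h := one_sub_inv_le_log_of_pos (show 0 < D / (D - 1) by positivity)
    rw [inv_div, one_sub_div (by positivity), sub_sub_cancel] at h
    calc (1 : ℝ) ≤ 2 * (D - 1) * (1 / D) := by
          rw [mul_one_div, le_div_iff₀ (by positivity)]; linarith
      _ ≤ 2 * (D - 1) * log (D / (D - 1)) := by gcongr
  have hexp : D / exp 1 ≤ 2 * D - 3 := by
    calc D / exp 1 ≤ D / 2 := by gcongr; linarith [add_one_le_exp 1]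
      _ ≤ 2 * D - 3 := by linarith
  rw [hlog_split]
  have key : 1 + D / exp 1 - log ε ≤ 2 * (D - 1) * (log (D / (D - 1)) - log ε) := by
    nlinarith
  calc ε * (1 + D / exp 1 - log ε) ≤ ε * (2 * (D - 1) * (log (D / (D - 1)) - log ε)) := by
        gcongr
    _ = _ := by ring

end Real

namespace Matrix

variable {n : Type*} [Fintype n] [DecidableEq n]

lemma PosSemidef.re_trace_mul_nonneg {A B : Matrix n n ℂ} (hA : A.PosSemidef)
    (hB : B.PosSemidef) : 0 ≤ (A * B).trace.re := by
  obtain ⟨C, rfl⟩ : ∃ C : Matrix n n ℂ, A = Cᴴ * C := by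
    open scoped MatrixOrder in exact CStarAlgebra.nonneg_iff_eq_star_mul_self.mp hA.nonneg
  rw [Matrix.mul_assoc, trace_mul_comm]
  exact (RCLike.nonneg_iff.mp (hB.mul_mul_conjTranspose_same C).trace_nonneg).1

lemma PosSemidef.eigenvalues_le_re_trace {A : Matrix n n ℂ} (hA : A.PosSemidef) (i : n) :
    hA.1.eigenvalues i ≤ A.trace.re := by
  rw [hA.1.trace_eq_sum_eigenvalues, Complex.re_sum]
  simpa using Finset.single_le_sum (fun j _ => hA.eigenvalues_nonneg j) (Finset.mem_univ i)

lemma IsHermitian.map_eigenvalues_cfc {A : Matrix n n ℂ} (hA : A.IsHermitian) (f : ℝ → ℝ)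
    (hf : (cfc f A).IsHermitian) :
    Finset.univ.val.map hf.eigenvalues = Finset.univ.val.map (f ∘ hA.eigenvalues) := by
  apply Multiset.map_injective Complex.ofReal_injective
  have h := hf.roots_charpoly_eq_eigenvalues
  rw [hA.charpoly_cfc_eq f, Polynomial.roots_prod _ _ (by
    simp [Finset.prod_ne_zero_iff, Polynomial.X_sub_C_ne_zero])] at h
  simpa [Multiset.map_map, Function.comp_def] using h.symm

lemma IsHermitian.cfc_mul_add {A : Matrix n n ℂ} (hA : A.IsHermitian) (a c : ℝ) :
    cfc (fun x => a * x + c) A = a • A + c • (1 : Matrix n n ℂ) := by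
  rw [cfc_add_const c _ A (ha := hA.isSelfAdjoint), cfc_const_mul_id _ _ hA.isSelfAdjoint,
    Algebra.algebraMap_eq_smul_one]

end Matrix

section Entropy

variable {k : ℕ}

noncomputable def depolarize (ε : ℝ) (A : Matrix (Fin k) (Fin k) ℂ) : Matrix (Fin k) (Fin k) ℂ :=
  (1 - ε) • A + (ε / k) • (1 : Matrix (Fin k) (Fin k) ℂ)

lemma vnEntropy_eq_sum_negMulLog {A : Matrix (Fin k) (Fin k) ℂ} (hA : A.IsHermitian) :
    vnEntropy A = ∑ i, negMulLog (hA.eigenvalues i) := by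
  simp [vnEntropy, hA, negMulLog]

lemma vnEntropy_cfc {A : Matrix (Fin k) (Fin k) ℂ} (hA : A.IsHermitian) (f : ℝ → ℝ) :
    vnEntropy (cfc f A) = ∑ i, negMulLog (f (hA.eigenvalues i)) := by
  have hf : (cfc f A).IsHermitian := cfc_predicate f A
  rw [vnEntropy_eq_sum_negMulLog hf]
  have h := congrArg (fun s => (s.map negMulLog).sum) (hA.map_eigenvalues_cfc f hf)
  simp only [Multiset.map_map] at h
  exact h

lemma vnEntropy_depolarize {A : Matrix (Fin k) (Fin k) ℂ} (hA : A.IsHermitian) (ε : ℝ) :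
    vnEntropy (depolarize ε A) = ∑ i, negMulLog ((1 - ε) * hA.eigenvalues i + ε / k) := by
  rw [depolarize, ← hA.cfc_mul_add, vnEntropy_cfc hA]

lemma vnEntropy_depolarize_sub_le (hk : 0 < k) {B : Matrix (Fin k) (Fin k) ℂ}
    (hB : B.PosSemidef) (htr : B.trace.re ≤ 1) {ε : ℝ} (hε₀ : 0 < ε) (hε₁ : ε ≤ 1) :
    vnEntropy (depolarize ε B) - vnEntropy B ≤ ε + ε * log k - ε * log ε := by
  have hk' : (0 : ℝ) < k := Nat.cast_pos.2 hk
  have heig₀ := hB.eigenvalues_nonneg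
  have heig₁ i : hB.1.eigenvalues i ≤ 1 := (hB.eigenvalues_le_re_trace i).trans htr
  have hη₁ : negMulLog (1 - ε) ≤ ε := by
    simpa using negMulLog_le_one_sub_self (sub_nonneg.2 hε₁)
  have hη₀ : 0 ≤ negMulLog (1 - ε) := negMulLog_nonneg (sub_nonneg.2 hε₁) (by linarith)
  have hηk : k * negMulLog (ε / k) = ε * log k - ε * log ε := by
    rw [negMulLog, log_div hε₀.ne' hk'.ne']
    field_simp
    ring
  rw [vnEntropy_depolarize hB.1, vnEntropy_eq_sum_negMulLog hB.1, ← Finset.sum_sub_distrib]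
  calc ∑ i, (negMulLog ((1 - ε) * hB.1.eigenvalues i + ε / k) - negMulLog (hB.1.eigenvalues i))
      ≤ ∑ i, (hB.1.eigenvalues i * negMulLog (1 - ε) + negMulLog (ε / k)) :=
        Finset.sum_le_sum fun i _ => negMulLog_mul_add_sub_le (by linarith) (by linarith)
          (heig₀ i) (heig₁ i) (by positivity)
    _ = B.trace.re * negMulLog (1 - ε) + k * negMulLog (ε / k) := by
        rw [Finset.sum_add_distrib, ← Finset.sum_mul, hB.1.trace_eq_sum_eigenvalues]
        simp
    _ ≤ 1 * ε + (ε * log k - ε * log ε) := by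
        rw [hηk]; gcongr
    _ = ε + ε * log k - ε * log ε := by ring

lemma le_vnEntropy_depolarize_sub (hk : 0 < k) {A : Matrix (Fin k) (Fin k) ℂ}
    (hA : A.PosSemidef) {ε : ℝ} (hε₀ : 0 ≤ ε) (hε₁ : ε ≤ 1) :
    ε * log k - k * ε * (exp 1)⁻¹ ≤ vnEntropy (depolarize ε A) - vnEntropy A := by
  have hk' : (0 : ℝ) < k := Nat.cast_pos.2 hk
  rw [vnEntropy_depolarize hA.1, vnEntropy_eq_sum_negMulLog hA.1, ← Finset.sum_sub_distrib]
  calc ε * log k - k * ε * (exp 1)⁻¹ = ∑ _i : Fin k, ε * (negMulLog (1 / k) - (exp 1)⁻¹) := by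
        rw [Finset.sum_const, Finset.card_univ, Fintype.card_fin, nsmul_eq_mul, one_div,
          negMulLog, log_inv]
        field_simp
    _ ≤ _ := Finset.sum_le_sum fun i _ => by
        simpa only [mul_one_div] using
          mul_sub_le_negMulLog_sub (y := 1 / k) hε₀ hε₁ (hA.eigenvalues_nonneg i) (by positivity)

lemma vnEntropy_depolarize_sub_sub_le (hk : 2 ≤ k) {A B : Matrix (Fin k) (Fin k) ℂ}
    (hA : A.PosSemidef) (hB : B.PosSemidef) (htr : B.trace.re ≤ 1) {ε : ℝ} (hε₀ : 0 < ε)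
    (hε₁ : ε ≤ (exp 1)⁻¹) :
    vnEntropy (depolarize ε B) - vnEntropy (depolarize ε A) -
        2 * ε * (k - 1) * log (k / (ε * (k - 1))) ≤ vnEntropy B - vnEntropy A := by
  have hε1 : ε ≤ 1 := hε₁.trans (inv_le_one_of_one_le₀ (one_le_exp zero_le_one))
  have hup := vnEntropy_depolarize_sub_le (by omega) hB htr hε₀ hε1
  have hlow := le_vnEntropy_depolarize_sub (by omega) hA hε₀.le hε1
  have harith := mul_one_add_div_exp_one_sub_log_le (D := k) (by exact_mod_cast hk) hε₀ hε₁
  have : (k : ℝ) * ε * (exp 1)⁻¹ = ε * (k / exp 1) := by ring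
  linarith

end Entropy

section KrausMap

variable {ι m n : Type*} [Fintype ι] [Fintype n]

def krausMap (K : ι → Matrix m n ℂ) (X : Matrix n n ℂ) : Matrix m m ℂ :=
  ∑ i, K i * X * (K i)ᴴ

lemma Matrix.PosSemidef.krausMap [Fintype m] {X : Matrix n n ℂ} (hX : X.PosSemidef)
    (K : ι → Matrix m n ℂ) : (krausMap K X).PosSemidef :=
  posSemidef_sum _ fun i _ => hX.mul_mul_conjTranspose_same (K i)

lemma trace_krausMap [Fintype m] (K : ι → Matrix m n ℂ) (X : Matrix n n ℂ) :
    (krausMap K X).trace = ((∑ i, (K i)ᴴ * K i) * X).trace := by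
  simp only [krausMap, trace_sum, Finset.sum_mul]
  exact Finset.sum_congr rfl fun i _ => trace_mul_cycle _ _ _

lemma re_trace_krausMap_le [Fintype m] [DecidableEq n] {K : ι → Matrix m n ℂ}
    (hK : (1 - ∑ i, (K i)ᴴ * K i).PosSemidef) {X : Matrix n n ℂ} (hX : X.PosSemidef) :
    (krausMap K X).trace.re ≤ X.trace.re := by
  have h := hK.re_trace_mul_nonneg hX
  rw [Matrix.sub_mul, Matrix.one_mul, trace_sub, Complex.sub_re] at h
  rw [trace_krausMap]
  linarith

lemma krausMap_smul_add_smul_one [DecidableEq m] [DecidableEq n] {K : ι → Matrix m n ℂ}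
    (hK : ∑ i, K i * (K i)ᴴ = 1) (a c : ℝ) (X : Matrix n n ℂ) :
    krausMap K (a • X + c • 1) = a • krausMap K X + c • (1 : Matrix m m ℂ) := by
  simp only [krausMap, Matrix.mul_add, Matrix.add_mul, Matrix.mul_smul, Matrix.smul_mul,
    Matrix.mul_one, Finset.sum_add_distrib, ← Finset.smul_sum, hK]

end KrausMap

lemma krausMap_depolarize {ι : Type*} [Fintype ι] {k : ℕ} {K : ι → Matrix (Fin k) (Fin k) ℂ}
    (hK : ∑ i, K i * (K i)ᴴ = 1) (ε : ℝ) (X : Matrix (Fin k) (Fin k) ℂ) :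
    krausMap K (depolarize ε X) = depolarize ε (krausMap K X) :=
  krausMap_smul_add_smul_one hK _ _ X

lemma re_trace_transpose_mul_sum_smul_transpose {ι n : Type*} [Fintype ι] [Fintype n]
    (Γ : ι → Matrix n n ℂ) (y : ι → ℝ) (σ : Matrix n n ℂ) :
    (σᵀ * ∑ i, y i • (Γ i)ᵀ).trace.re = ∑ i, y i * (Γ i * σ).trace.re := by
  simp only [Matrix.mul_sum, trace_sum, Complex.re_sum, Matrix.mul_smul, trace_smul,
    trace_transpose_mul, trace_mul_comm σ, Complex.real_smul, Complex.re_ofReal_mul]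

/-- Weak duality for the relaxed constraints `|Re Tr(Γ_i σ) - γ_i| ≤ δ`. -/
lemma sum_mul_sub_mul_sum_le_re_trace {ι n : Type*} [Fintype ι] [Fintype n] [DecidableEq n]
    {Γ : ι → Matrix n n ℂ} {γ y z : ι → ℝ} {δ : ℝ} {σ M : Matrix n n ℂ} (hσ : σ.PosSemidef)
    (hσΓ : ∀ i, |(Γ i * σ).trace.re - γ i| ≤ δ) (hyz : ∀ i, -z i ≤ y i ∧ y i ≤ z i)
    (hM : (M - ∑ i, y i • (Γ i)ᵀ).PosSemidef) :
    ∑ i, γ i * y i - δ * ∑ i, z i ≤ (σᵀ * M).trace.re := by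
  have hterm i : γ i * y i - δ * z i ≤ y i * (Γ i * σ).trace.re := by
    have hz : 0 ≤ z i := by linarith [hyz i]
    have h : |y i * ((Γ i * σ).trace.re - γ i)| ≤ z i * δ := by
      rw [abs_mul]
      exact mul_le_mul (abs_le.2 (hyz i)) (hσΓ i) (abs_nonneg _) hz
    linarith [neg_abs_le (y i * ((Γ i * σ).trace.re - γ i))]
  have hpos := hσ.transpose.re_trace_mul_nonneg hM
  rw [Matrix.mul_sub, trace_sub, Complex.sub_re,
    re_trace_transpose_mul_sum_smul_transpose] at hpos
  calc ∑ i, γ i * y i - δ * ∑ i, z i = ∑ i, (γ i * y i - δ * z i) := by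
        rw [Finset.sum_sub_distrib, Finset.mul_sum]
    _ ≤ ∑ i, y i * (Γ i * σ).trace.re := Finset.sum_le_sum fun i _ => hterm i
    _ ≤ (σᵀ * M).trace.re := by linarith

theorem relaxed_dual_lower_bound_general
    {d d' n m p : ℕ} (hd' : 2 ≤ d')
    (Γt : Fin n → Matrix (Fin d) (Fin d) ℂ)
    (γt : Fin n → ℝ)
    (ε' : ℝ)
    (St : Set (Matrix (Fin d) (Fin d) ℂ))
    (hSt : St = {ρ | ρ.PosSemidef ∧ ∀ i, |((Γt i * ρ).trace).re - γt i| ≤ ε'})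
    (K : Fin m → Matrix (Fin d') (Fin d) ℂ)
    (hK : ((1 : Matrix (Fin d) (Fin d) ℂ) - ∑ i, (K i)ᴴ * K i).PosSemidef)
    (G : Matrix (Fin d) (Fin d) ℂ → Matrix (Fin d') (Fin d') ℂ)
    (hG : G = fun X => ∑ i, K i * X * (K i)ᴴ)
    (P : Fin p → Matrix (Fin d') (Fin d') ℂ)
    (hP1 : ∀ j, (P j)ᴴ = P j) (hP2 : ∀ j, P j * P j = P j)
    (hP4 : ∑ j, P j = 1)
    (Z : Matrix (Fin d') (Fin d') ℂ → Matrix (Fin d') (Fin d') ℂ)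
    (hZ : Z = fun X => ∑ j, P j * X * P j)
    (ε : ℝ) (hε0 : 0 < ε) (hεe : ε ≤ 1 / (Real.exp 1 * ((d' : ℝ) - 1)))
    (f fε : Matrix (Fin d) (Fin d) ℂ → ℝ)
    (hf : f = fun X => vnEntropy (Z (G X)) - vnEntropy (G X))
    (Gε : Matrix (Fin d) (Fin d) ℂ → Matrix (Fin d') (Fin d') ℂ)
    (hGε : Gε = fun X => (1 - ε) • G X + (ε / d') • (1 : Matrix (Fin d') (Fin d') ℂ))
    (hfε : fε = fun X => vnEntropy (Z (Gε X)) - vnEntropy (Gε X))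
    (ζ : ℝ) (hζ : ζ = 2 * ε * ((d' : ℝ) - 1) * Real.log ((d' : ℝ) / (ε * ((d' : ℝ) - 1))))
    (ρ : Matrix (Fin d) (Fin d) ℂ)
    (grad : Matrix (Fin d) (Fin d) ℂ)
    (hsub : ∀ σ ∈ St, fε σ ≥ fε ρ + (((σ - ρ)ᵀ * grad).trace).re)
    (y z : Fin n → ℝ) (hyz : ∀ i, -z i ≤ y i ∧ y i ≤ z i)
    (hy : (grad - ∑ i, y i • (Γt i)ᵀ).PosSemidef) :
    ∀ σ ∈ St, σ.trace = 1 →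
      f σ ≥ fε ρ - ((ρᵀ * grad).trace).re + ∑ i, γt i * y i - ε' * ∑ i, z i - ζ := by
  intro σ hσ hσtr
  obtain ⟨hσpsd, hσΓ⟩ : σ.PosSemidef ∧ _ := hSt ▸ hσ
  have hG' : G = krausMap K := hG
  have hZ' : Z = krausMap P := by funext X; simp only [hZ, krausMap, hP1]
  have hPP : ∑ j, P j * (P j)ᴴ = 1 := by simp only [hP1, hP2, hP4]
  have hPP' : ∑ j, (P j)ᴴ * P j = 1 := by simp only [hP1, hP2, hP4]
  have hGσ : (G σ).PosSemidef := hG' ▸ hσpsd.krausMap K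
  have hperturb : fε σ - ζ ≤ f σ := by
    have htr : (Z (G σ)).trace.re ≤ 1 := by
      rw [hZ', trace_krausMap, hPP', Matrix.one_mul, hG']
      simpa [hσtr] using re_trace_krausMap_le hK hσpsd
    have hεe' : ε ≤ (Real.exp 1)⁻¹ := hεe.trans <| by
      rw [one_div]
      refine inv_anti₀ (Real.exp_pos 1) (le_mul_of_one_le_right (Real.exp_pos 1).le ?_)
      linarith [show (2 : ℝ) ≤ d' by exact_mod_cast hd']
    have h := vnEntropy_depolarize_sub_sub_le hd' hGσ (hZ' ▸ hGσ.krausMap P) htr hε0 hεe'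
    have hGεσ : Gε σ = depolarize ε (G σ) := by rw [hGε]; rfl
    rw [hZ', ← krausMap_depolarize hPP, ← hGεσ, ← hZ', ← hζ] at h
    simp only [hf, hfε]
    linarith
  have hdual := sum_mul_sub_mul_sum_le_re_trace hσpsd hσΓ hyz hy
  have hstep := hsub σ hσ
  rw [transpose_sub, Matrix.sub_mul, trace_sub, Complex.sub_re] at hstep
  linarith

/-- Theorem 3 of the paper, robust to numerical imprecision. For
`ρ` in the relaxed constraint set `S̃_{ε'}`, a Hermitian `∇` satisfying the
subgradient inequality for the perturbed objective `f_ε` on `S̃_{ε'}`, and a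
relaxed dual-feasible pair `(y, z)`, every trace-one `σ ∈ S̃_{ε'}` satisfies
`f(σ) ≥ f_ε(ρ) − Re Tr(ρᵀ ∇) + Σ γ̃_i y_i − ε' Σ z_i − ζ_ε`. -/
theorem relaxed_dual_lower_bound
    {d d' n m p : ℕ} (hd' : 2 ≤ d')
    (Γt : Fin n → Matrix (Fin d) (Fin d) ℂ) (hΓt : ∀ i, (Γt i).IsHermitian)
    (γt : Fin n → ℝ)
    (ε' : ℝ) (hε' : 0 < ε')
    (St : Set (Matrix (Fin d) (Fin d) ℂ))
    (hSt : St = {ρ | ρ.PosSemidef ∧ ∀ i, |((Γt i * ρ).trace).re - γt i| ≤ ε'})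
    (K : Fin m → Matrix (Fin d') (Fin d) ℂ)
    (hK : ((1 : Matrix (Fin d) (Fin d) ℂ) - ∑ i, (K i)ᴴ * K i).PosSemidef)
    (G : Matrix (Fin d) (Fin d) ℂ → Matrix (Fin d') (Fin d') ℂ)
    (hG : G = fun X => ∑ i, K i * X * (K i)ᴴ)
    (P : Fin p → Matrix (Fin d') (Fin d') ℂ)
    (hP1 : ∀ j, (P j)ᴴ = P j) (hP2 : ∀ j, P j * P j = P j)
    (hP3 : ∀ j k, j ≠ k → P j * P k = 0)
    (hP4 : ∑ j, P j = 1)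
    (Z : Matrix (Fin d') (Fin d') ℂ → Matrix (Fin d') (Fin d') ℂ)
    (hZ : Z = fun X => ∑ j, P j * X * P j)
    (ε : ℝ) (hε0 : 0 < ε) (hεe : ε ≤ 1 / (Real.exp 1 * ((d' : ℝ) - 1)))
    (f fε : Matrix (Fin d) (Fin d) ℂ → ℝ)
    (hf : f = fun X => vnEntropy (Z (G X)) - vnEntropy (G X))
    (Gε : Matrix (Fin d) (Fin d) ℂ → Matrix (Fin d') (Fin d') ℂ)
    (hGε : Gε = fun X => (1 - ε) • G X + (ε / d') • (1 : Matrix (Fin d') (Fin d') ℂ))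
    (hfε : fε = fun X => vnEntropy (Z (Gε X)) - vnEntropy (Gε X))
    (ζ : ℝ) (hζ : ζ = 2 * ε * ((d' : ℝ) - 1) * Real.log ((d' : ℝ) / (ε * ((d' : ℝ) - 1))))
    (ρ : Matrix (Fin d) (Fin d) ℂ) (hρ : ρ ∈ St)
    (grad : Matrix (Fin d) (Fin d) ℂ) (hgrad : grad.IsHermitian)
    (hsub : ∀ σ ∈ St, fε σ ≥ fε ρ + (((σ - ρ)ᵀ * grad).trace).re)
    (y z : Fin n → ℝ) (hyz : ∀ i, -z i ≤ y i ∧ y i ≤ z i)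
    (hy : (grad - ∑ i, y i • (Γt i)ᵀ).PosSemidef) :
    ∀ σ ∈ St, σ.trace = 1 →
      f σ ≥ fε ρ - ((ρᵀ * grad).trace).re + ∑ i, γt i * y i - ε' * ∑ i, z i - ζ :=
  relaxed_dual_lower_bound_general hd' Γt γt ε' St hSt K hK G hG P hP1 hP2 hP4 Z hZ ε hε0 hεe f fε
    hf Gε hGε hfε ζ hζ ρ grad hsub y z hyz hy
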